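/- In the real-valued one-step BDAR(1) setup, assume additionally that E[ε1] = E[Z1p] = μ1, E[ε2] = E[Z2p] = μ2, that φ12 < 1, and the stationarity condition E[Z1·Z2] = E[Z1p·Z2p]. Then the contemporaneous cross-covariance satisfies Cov(Z1, Z2) = (1 − φ1 − φ2 + φ12)·(E[ε1·ε2] − μ1·μ2) / (1 − φ12). -/

import Mathlib

/-!
Conditioning on the finitely many values of the mechanism `α`, which is independent of
`(Z1p, Z2p, ε1, ε2)`, writes every moment of `(Z1, Z2)` as a mixture of moments of
`(Z1p, Z2p, ε1, ε2)` with weights `P(α = a)`. Hence `E[Z1] = μ1`, `E[Z2] = μ2`, and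
`E[Z1 Z2]` is the mixture of `E[Z1p Z2p]`, `E[ε1 ε2]` and the two cross moments, which equal
`μ1 μ2` because `ε` is independent of `Zp`. Stationarity makes this a linear equation for
`E[Z1p Z2p]` with leading coefficient `1 - φ12 ≠ 0`.
-/

open MeasureTheory ProbabilityTheory

section

variable {Ω : Type*} [MeasurableSpace Ω] {P : Measure Ω}

theorem memLp_of_abs_le [IsFiniteMeasure P] {f : Ω → ℝ} (hf : Measurable f)
    (hb : ∃ C, ∀ ω, |f ω| ≤ C) (p : ENNReal) : MemLp f p P := by
  obtain ⟨C, hC⟩ := hb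
  exact .of_bound hf.aestronglyMeasurable C (ae_of_all _ hC)

theorem integral_comp_eq_sum_of_indepFun [IsFiniteMeasure P] {ι β : Type*} [Fintype ι]
    [MeasurableSpace ι] [MeasurableSingletonClass ι] [MeasurableSpace β]
    {α : Ω → ι} {q : Ω → β} (hα : Measurable α) (hq : AEMeasurable q P) (hind : IndepFun α q P)
    {F : ι → β → ℝ} (hF : ∀ a, Measurable (F a)) (hFi : ∀ a, Integrable (fun ω ↦ F a (q ω)) P) :
    ∫ ω, F (α ω) (q ω) ∂P = ∑ a, P.real (α ⁻¹' {a}) * ∫ ω, F a (q ω) ∂P := by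
  have hfiber (a : ι) : MeasurableSet (α ⁻¹' {a}) := hα (measurableSet_singleton a)
  have hsplit (ω : Ω) :
      F (α ω) (q ω) = ∑ a, (α ⁻¹' {a}).indicator (fun ω ↦ F a (q ω)) ω := by
    rw [Finset.sum_eq_single_of_mem (α ω) (Finset.mem_univ _)]
    · simp
    · intro a _ ha
      exact Set.indicator_of_notMem (fun h ↦ ha h.symm) _
  simp_rw [hsplit]
  rw [integral_finsetSum _ fun a _ ↦ (hFi a).indicator (hfiber a)]
  refine Finset.sum_congr rfl fun a _ ↦ ?_
  rw [integral_indicator (hfiber a)]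
  exact Indep.setIntegral_eq_mul hα.comap_le hind hq ⟨{a}, measurableSet_singleton a, rfl⟩
    (hF a).aestronglyMeasurable

theorem measureReal_setOf_fst_eq_true [IsFiniteMeasure P] {α : Ω → Bool × Bool}
    (hα : Measurable α) :
    P.real {ω | (α ω).1 = true}
      = P.real (α ⁻¹' {(true, true)}) + P.real (α ⁻¹' {(true, false)}) := by
  have hset : {ω | (α ω).1 = true} = α ⁻¹' ↑({(true, true), (true, false)} : Finset _) := by
    ext ω; rcases hω : α ω with ⟨_ | _, _ | _⟩ <;> simp [hω]
  rw [hset, ← sum_measureReal_preimage_singleton _ fun a _ ↦ hα (measurableSet_singleton a),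
    Finset.sum_pair (by decide)]

theorem measureReal_setOf_snd_eq_true [IsFiniteMeasure P] {α : Ω → Bool × Bool}
    (hα : Measurable α) :
    P.real {ω | (α ω).2 = true}
      = P.real (α ⁻¹' {(true, true)}) + P.real (α ⁻¹' {(false, true)}) := by
  have hset : {ω | (α ω).2 = true} = α ⁻¹' ↑({(true, true), (false, true)} : Finset _) := by
    ext ω; rcases hω : α ω with ⟨_ | _, _ | _⟩ <;> simp [hω]
  rw [hset, ← sum_measureReal_preimage_singleton _ fun a _ ↦ hα (measurableSet_singleton a),
    Finset.sum_pair (by decide)]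

variable [IsProbabilityMeasure P]

theorem sum_measureReal_fiber_eq_one {ι : Type*} [Fintype ι] [MeasurableSpace ι]
    [MeasurableSingletonClass ι] {α : Ω → ι} (hα : Measurable α) :
    ∑ a, P.real (α ⁻¹' {a}) = 1 := by
  rw [sum_measureReal_preimage_singleton _ fun a _ ↦ hα (measurableSet_singleton a),
    Finset.coe_univ, Set.preimage_univ, probReal_univ]

theorem integral_ite_of_indepFun {b : Ω → Bool} {X Y : Ω → ℝ} (hb : Measurable b)
    (hind : IndepFun b (fun ω ↦ (X ω, Y ω)) P) (hX : Integrable X P) (hY : Integrable Y P) :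
    ∫ ω, (if b ω then X ω else Y ω) ∂P
      = P.real {ω | b ω = true} * ∫ ω, X ω ∂P + (1 - P.real {ω | b ω = true}) * ∫ ω, Y ω ∂P := by
  have hsum : P.real {ω | b ω = true} + P.real (b ⁻¹' {false}) = 1 :=
    (Fintype.sum_bool fun c ↦ P.real (b ⁻¹' {c})).symm.trans (sum_measureReal_fiber_eq_one hb)
  rw [integral_comp_eq_sum_of_indepFun hb (hX.aemeasurable.prodMk hY.aemeasurable) hind
    (F := fun c x ↦ if c then x.1 else x.2), Fintype.sum_bool, ← hsum, add_sub_cancel_left]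
  · rfl
  · rintro (_ | _) <;> simp only [Bool.false_eq_true, ↓reduceIte] <;> fun_prop
  · rintro (_ | _)
    exacts [hY, hX]

theorem integral_ite_mul_ite_of_indepFun {α : Ω → Bool × Bool} {X₁ X₂ Y₁ Y₂ : Ω → ℝ}
    (hα : Measurable α) (hind : IndepFun α (fun ω ↦ (X₁ ω, X₂ ω, Y₁ ω, Y₂ ω)) P)
    (hX₁ : MemLp X₁ 2 P) (hX₂ : MemLp X₂ 2 P) (hY₁ : MemLp Y₁ 2 P) (hY₂ : MemLp Y₂ 2 P) :
    ∫ ω, (if (α ω).1 then X₁ ω else Y₁ ω) * (if (α ω).2 then X₂ ω else Y₂ ω) ∂P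
      = P.real (α ⁻¹' {(true, true)}) * ∫ ω, X₁ ω * X₂ ω ∂P
        + P.real (α ⁻¹' {(true, false)}) * ∫ ω, X₁ ω * Y₂ ω ∂P
        + P.real (α ⁻¹' {(false, true)}) * ∫ ω, Y₁ ω * X₂ ω ∂P
        + P.real (α ⁻¹' {(false, false)}) * ∫ ω, Y₁ ω * Y₂ ω ∂P := by
  rw [integral_comp_eq_sum_of_indepFun hα
    (hX₁.aemeasurable.prodMk (hX₂.aemeasurable.prodMk (hY₁.aemeasurable.prodMk hY₂.aemeasurable)))
    hind (F := fun a x ↦ (if a.1 then x.1 else x.2.2.1) * (if a.2 then x.2.1 else x.2.2.2))]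
  · simp only [Fintype.sum_prod_type, Fintype.sum_bool, Bool.false_eq_true, ↓reduceIte]
    ring
  · rintro ⟨_ | _, _ | _⟩ <;> simp only [Bool.false_eq_true, ↓reduceIte] <;> fun_prop
  · rintro ⟨_ | _, _ | _⟩
    exacts [hY₁.integrable_mul hY₂, hY₁.integrable_mul hX₂, hX₁.integrable_mul hY₂,
      hX₁.integrable_mul hX₂]

end

/-- **Contemporaneous cross-covariance of the stationary BDAR(1) model.**
In the real-valued one-step BDAR(1) setup, assuming `E[ε1] = E[Z1p] = μ1`,
`E[ε2] = E[Z2p] = μ2`, `φ12 < 1`, and the stationarity condition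
`E[Z1·Z2] = E[Z1p·Z2p]`, we have
`Cov(Z1, Z2) = (1 - φ1 - φ2 + φ12)·(E[ε1·ε2] - μ1·μ2) / (1 - φ12)`. -/
theorem bdar1_cross_covariance_lag0
    {Ω : Type*} [MeasurableSpace Ω] (P : Measure Ω) [IsProbabilityMeasure P]
    (Z1p Z2p ε1 ε2 : Ω → ℝ) (α : Ω → Bool × Bool)
    (hZ1pm : Measurable Z1p) (hZ2pm : Measurable Z2p)
    (hε1m : Measurable ε1) (hε2m : Measurable ε2) (hαm : Measurable α)
    (hZ1pb : ∃ C, ∀ ω, |Z1p ω| ≤ C) (hZ2pb : ∃ C, ∀ ω, |Z2p ω| ≤ C)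
    (hε1b : ∃ C, ∀ ω, |ε1 ω| ≤ C) (hε2b : ∃ C, ∀ ω, |ε2 ω| ≤ C)
    -- α is independent of the quadruple (Z1p, Z2p, ε1, ε2)
    (hα : IndepFun α (fun ω => (Z1p ω, Z2p ω, ε1 ω, ε2 ω)) P)
    -- (ε1, ε2) is independent of (Z1p, Z2p)
    (hε : IndepFun (fun ω => (ε1 ω, ε2 ω)) (fun ω => (Z1p ω, Z2p ω)) P)
    (Z1 Z2 : Ω → ℝ)
    (hZ1 : ∀ ω, Z1 ω = if (α ω).1 then Z1p ω else ε1 ω)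
    (hZ2 : ∀ ω, Z2 ω = if (α ω).2 then Z2p ω else ε2 ω)
    (φ1 φ2 φ12 : ℝ)
    (hφ1 : φ1 = (P {ω | (α ω).1 = true}).toReal)
    (hφ2 : φ2 = (P {ω | (α ω).2 = true}).toReal)
    (hφ12 : φ12 = (P {ω | α ω = (true, true)}).toReal)
    (μ1 μ2 : ℝ)
    (hμ1ε : ∫ ω, ε1 ω ∂P = μ1) (hμ1Z : ∫ ω, Z1p ω ∂P = μ1)
    (hμ2ε : ∫ ω, ε2 ω ∂P = μ2) (hμ2Z : ∫ ω, Z2p ω ∂P = μ2)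
    (hφ12lt : φ12 < 1)
    -- stationarity condition
    (hstat : ∫ ω, Z1 ω * Z2 ω ∂P = ∫ ω, Z1p ω * Z2p ω ∂P) :
    (∫ ω, Z1 ω * Z2 ω ∂P) - (∫ ω, Z1 ω ∂P) * (∫ ω, Z2 ω ∂P)
      = (1 - φ1 - φ2 + φ12) * ((∫ ω, ε1 ω * ε2 ω ∂P) - μ1 * μ2) / (1 - φ12) := by
  obtain rfl : Z1 = fun ω ↦ if (α ω).1 then Z1p ω else ε1 ω := funext hZ1
  obtain rfl : Z2 = fun ω ↦ if (α ω).2 then Z2p ω else ε2 ω := funext hZ2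
  have hZ1pL := memLp_of_abs_le (P := P) hZ1pm hZ1pb 2
  have hZ2pL := memLp_of_abs_le (P := P) hZ2pm hZ2pb 2
  have hε1L := memLp_of_abs_le (P := P) hε1m hε1b 2
  have hε2L := memLp_of_abs_le (P := P) hε2m hε2b 2
  have hα₁ : IndepFun (fun ω ↦ (α ω).1) (fun ω ↦ (Z1p ω, ε1 ω)) P :=
    hα.comp (φ := Prod.fst) (ψ := fun x : ℝ × ℝ × ℝ × ℝ ↦ (x.1, x.2.2.1)) measurable_fst
      (by fun_prop)
  have hα₂ : IndepFun (fun ω ↦ (α ω).2) (fun ω ↦ (Z2p ω, ε2 ω)) P :=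
    hα.comp (φ := Prod.snd) (ψ := fun x : ℝ × ℝ × ℝ × ℝ ↦ (x.2.1, x.2.2.2)) measurable_snd
      (by fun_prop)
  have hEZ1 : ∫ ω, (if (α ω).1 then Z1p ω else ε1 ω) ∂P = μ1 := by
    rw [integral_ite_of_indepFun hαm.fst hα₁
      (hZ1pL.integrable one_le_two) (hε1L.integrable one_le_two), hμ1Z, hμ1ε]
    ring
  have hEZ2 : ∫ ω, (if (α ω).2 then Z2p ω else ε2 ω) ∂P = μ2 := by
    rw [integral_ite_of_indepFun hαm.snd hα₂
      (hZ2pL.integrable one_le_two) (hε2L.integrable one_le_two), hμ2Z, hμ2ε]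
    ring
  have hZ1pε2 : ∫ ω, Z1p ω * ε2 ω ∂P = μ1 * μ2 := by
    rw [← hμ1Z, ← hμ2ε]
    exact (hε.comp measurable_snd measurable_fst).symm.integral_mul_eq_mul_integral
      hZ1pm.aestronglyMeasurable hε2m.aestronglyMeasurable
  have hε1Z2p : ∫ ω, ε1 ω * Z2p ω ∂P = μ1 * μ2 := by
    rw [← hμ1ε, ← hμ2Z]
    exact (hε.comp measurable_fst measurable_snd).integral_mul_eq_mul_integral
      hε1m.aestronglyMeasurable hZ2pm.aestronglyMeasurable
  have hsum := sum_measureReal_fiber_eq_one (P := P) hαm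
  simp only [Fintype.sum_prod_type, Fintype.sum_bool] at hsum
  have hmix := integral_ite_mul_ite_of_indepFun hαm hα hZ1pL hZ2pL hε1L hε2L
  rw [hstat, hZ1pε2, hε1Z2p] at hmix
  have hφ12' : φ12 = P.real (α ⁻¹' {(true, true)}) := hφ12
  rw [hEZ1, hEZ2, hstat, eq_div_iff (by linarith), hφ1, hφ2, hφ12', ← measureReal_def,
    ← measureReal_def, measureReal_setOf_fst_eq_true hαm, measureReal_setOf_snd_eq_true hαm]
  linear_combination hmix + (∫ ω, ε1 ω * ε2 ω ∂P) * hsum
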